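/- The two example expressions ((seq True (λx.a)) True) and (letrec x1 = True, x2 = λx.a in (seq True x2) x1) have spmax-values 5 + size(a) and 4 + 2·size(a) respectively; hence for size(a) ≥ 2 the second (the ψ-style machine translation) uses strictly more maximal space. -/
import Mathlib


/-- A small untyped core language: the constant True, variables,
abstractions, applications, seq and letrec. -/
inductive SExpr : Type where
  | tt : SExpr
  | var : ℕ → SExpr
  | lam : ℕ → SExpr → SExpr
  | app : SExpr → SExpr → SExpr
  | seqE : SExpr → SExpr → SExpr
  | letrec : List (ℕ × SExpr) → SExpr → SExpr
deriving Inhabited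

/-- The size measure: constants and abstractions count 1, applications and
seq count 1 plus the sizes of the arguments, letrec counts the sum of the
sizes of the bindings plus the body, variables count 0. -/
def SExpr.size : SExpr → ℕ
  | .tt => 1
  | .var _ => 0
  | .lam _ s => 1 + s.size
  | .app s t => 1 + s.size + t.size
  | .seqE s t => 1 + s.size + t.size
  | .letrec bs t => t.size + (bs.attach.map (fun b => b.1.2.size)).sum
decreasing_by all_goals first
  | (simp <;> omega)
  | (have h1 := List.sizeOf_lt_of_mem b.2;
     obtain ⟨⟨a1, a2⟩, hm⟩ := b <;> simp_all <;> omega)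

/-- Free variables. -/
def SExpr.fv : SExpr → Finset ℕ
  | .tt => ∅
  | .var x => {x}
  | .lam x s => s.fv \ {x}
  | .app s t => s.fv ∪ t.fv
  | .seqE s t => s.fv ∪ t.fv
  | .letrec bs t =>
      (t.fv ∪ (bs.attach.map (fun b => b.1.2.fv)).foldr (· ∪ ·) ∅) \
        (bs.map Prod.fst).toFinset
decreasing_by all_goals first
  | (simp <;> omega)
  | (have h1 := List.sizeOf_lt_of_mem b.2;
     obtain ⟨⟨a1, a2⟩, hm⟩ := b <;> simp_all <;> omega)

/-- Values: the constant True and abstractions. -/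
def SExpr.isValue : SExpr → Prop
  | .tt => True
  | .lam _ _ => True
  | _ => False

/-- nogc-reduction with eager garbage collection: (seq-c), (lbeta), copying
of letrec-bound abstractions to demanded positions (cp), merging of letrecs
(llet), garbage collection (gc1)/(gc2), and the closure under the reduction
contexts (application/seq on the left, letrec bodies). -/
inductive SStep : SExpr → SExpr → Prop where
  | seqc : ∀ v t, v.isValue → SStep (.seqE v t) t
  | lbeta : ∀ x s r, SStep (.app (.lam x s) r) (.letrec [(x, r)] s)
  | cp : ∀ bs x y b t, (x, SExpr.lam y b) ∈ bs →
      SStep (.letrec bs (.app (.var x) t)) (.letrec bs (.app (.lam y b) t))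
  | llet : ∀ bs cs t, SStep (.letrec bs (.letrec cs t)) (.letrec (bs ++ cs) t)
  | gc1 : ∀ bs bs' t, bs' ≠ bs → List.Sublist bs' bs →
      (∀ p ∈ bs, p ∉ bs' → p.1 ∉ t.fv ∧ ∀ q ∈ bs', p.1 ∉ (Prod.snd q).fv) →
      SStep (.letrec bs t) (.letrec bs' t)
  | gc2 : ∀ bs t, (∀ p ∈ bs, p.1 ∉ t.fv) → SStep (.letrec bs t) t
  | appL : ∀ s s' t, SStep s s' → SStep (.app s t) (.app s' t)
  | seqL : ∀ s s' t, SStep s s' → SStep (.seqE s t) (.seqE s' t)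
  | letrecBody : ∀ bs t t', SStep t t' → SStep (.letrec bs t) (.letrec bs t')

/-- Weak head normal forms. -/
def WHNF (e : SExpr) : Prop :=
  e.isValue ∨ ∃ bs v, e = SExpr.letrec bs v ∧ SExpr.isValue v

/-- `spmaxIs s m`: there is a nogc-reduction sequence from `s` to a WHNF
whose maximal intermediate size is `m`. -/
def spmaxIs (s : SExpr) (m : ℕ) : Prop :=
  ∃ l : List SExpr, l.head? = some s ∧ l.Chain' SStep ∧
    (∃ h : l ≠ [], WHNF (l.getLast h)) ∧ m = (l.map SExpr.size).foldr max 0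

/-- the expression `(seq True (λx.a)) True` has spmax-value
`5 + size a`, while its machine translation
`letrec x₁ = True, x₂ = λx.a in (seq True x₂) x₁` has spmax-value
`4 + 2·size a` (space peak at `letrec x₁ = True, x₂ = λx.a in (λx.a) x₁`);
hence for `size a ≥ 2` the second expression uses strictly more space. -/
theorem seq_example_spmax (a : SExpr) (x : ℕ)
    (hval : a.isValue) (hclosed : a.fv = ∅) (hsize : 2 ≤ a.size) :
    spmaxIs (.app (.seqE .tt (.lam x a)) .tt) (5 + a.size) ∧
    spmaxIs (.letrec [(1, .tt), (2, .lam x a)]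
        (.app (.seqE .tt (.var 2)) (.var 1))) (4 + 2 * a.size) ∧
    5 + a.size < 4 + 2 * a.size := by
  constructor
  · -- first expression
    refine ⟨[.app (.seqE .tt (.lam x a)) .tt,
             .app (.lam x a) .tt,
             .letrec [(x, .tt)] a], rfl, ?_, ?_, ?_⟩
    · refine List.IsChain.cons_cons ?_ (List.IsChain.cons_cons ?_ (List.isChain_singleton _))
      · exact SStep.appL _ _ _ (SStep.seqc _ _ trivial)
      · exact SStep.lbeta x a .tt
    · exact ⟨by simp, Or.inr ⟨_, _, rfl, hval⟩⟩
    · simp [SExpr.size]; omega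
  refine ⟨?_, by omega⟩
  -- second expression
  refine ⟨[.letrec [(1, .tt), (2, .lam x a)] (.app (.seqE .tt (.var 2)) (.var 1)),
           .letrec [(1, .tt), (2, .lam x a)] (.app (.var 2) (.var 1)),
           .letrec [(1, .tt), (2, .lam x a)] (.app (.lam x a) (.var 1)),
           .letrec [(1, .tt), (2, .lam x a)] (.letrec [(x, .var 1)] a),
           .letrec ([(1, .tt), (2, .lam x a)] ++ [(x, .var 1)]) a], rfl, ?_, ?_, ?_⟩
  · refine List.IsChain.cons_cons ?_ (List.IsChain.cons_cons ?_ (List.IsChain.cons_cons ?_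
      (List.IsChain.cons_cons ?_ (List.isChain_singleton _))))
    · exact SStep.letrecBody _ _ _ (SStep.appL _ _ _ (SStep.seqc _ _ trivial))
    · exact SStep.cp _ 2 x a _ (by simp)
    · exact SStep.letrecBody _ _ _ (SStep.lbeta x a (.var 1))
    · exact SStep.llet _ _ _
  · exact ⟨by simp, Or.inr ⟨_, _, rfl, hval⟩⟩
  · simp [SExpr.size]; omega
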